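/- With notation as in the successor construction, fix 1 ≤ s ≤ l, set p = p_s, and let P̃ = {a_{m−1}‖w : w ∈ P̃₀} where P̃₀ is obtained from P₀ by expanding the word corresponding to p (so P̃ = (P ∖ {p}) ∪ {p‖a_0,…,p‖a_{m−1}}). Then the successors computed for P̃ are uniquely determined as follows: for each 1 ≤ r ≤ m−1 and each 1 ≤ j ≤ k, (p‖a_r)'_j = p‖a_{m+(m−1−r)k+(j−1)}; and for each 1 ≤ j ≤ k, (p‖a_0)'_j = (p)'_j, the j-th successor of p computed for P. -/
import Mathlib

namespace Paper

/-- The finite word `w` is a prefix of the infinite word `ζ`. -/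
def IsPref {n : ℕ} (w : List (Fin n)) (ζ : ℕ → Fin n) : Prop :=
  ∀ (i : ℕ) (h : i < w.length), w[i]'h = ζ i

/-- Dictionary order on finite words. -/
def DictLe {N : ℕ} (u v : List (Fin N)) : Prop :=
  u <+: v ∨ ∃ (x s t : List (Fin N)) (α β : Fin N),
    α < β ∧ u = x ++ α :: s ∧ v = x ++ β :: t

/-- Strict dictionary order. -/
def DictLt {N : ℕ} (u v : List (Fin N)) : Prop := DictLe u v ∧ u ≠ v

/-- The candidate set at a given stage of the successor recursion for the code
enumerated by `p`: words of the form `x‖a_j` with `x` a strict prefix of an element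
of `P`, `m ≤ j ≤ n-1`, which are dictionary-greater than `p s` and have not been
chosen at an earlier stage (`prev`). -/
def Cand {N : ℕ} (m : ℕ) {l : ℕ} (p : Fin l → List (Fin N)) (s : Fin l)
    (prev : Set (List (Fin N))) : Set (List (Fin N)) :=
  {w | (∃ x : List (Fin N), (∃ u : Fin l, x <+: p u ∧ x ≠ p u) ∧
        ∃ j : Fin N, m ≤ (j : ℕ) ∧ w = x ++ [j]) ∧
       DictLt (p s) w ∧ w ∉ prev}

/-- The set of successors chosen at stages strictly earlier than stage `(s, i)`,
where stages are ordered lexicographically: first in `s`, then in `i`. -/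
def Prev {N l k : ℕ} (f : Fin l → Fin k → List (Fin N)) (s : Fin l) (i : Fin k) :
    Set (List (Fin N)) :=
  {w | ∃ (s' : Fin l) (i' : Fin k), (s' < s ∨ (s' = s ∧ i' < i)) ∧ w = f s' i'}

/-- `f` is the successor assignment for the code enumerated by `p`:
`f s i` (the `i`-th successor `(p_s)'_i`) is the dictionary-least element of the
candidate set at stage `(s, i)`. -/
def IsSuccAssign {N l k : ℕ} (m : ℕ) (p : Fin l → List (Fin N))
    (f : Fin l → Fin k → List (Fin N)) : Prop :=
  ∀ (s : Fin l) (i : Fin k),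
    f s i ∈ Cand m p s (Prev f s i) ∧
    ∀ w ∈ Cand m p s (Prev f s i), DictLe (f s i) w

section Toolkit

variable {N : ℕ}

lemma lex_of_prefix_ne : ∀ {u v : List (Fin N)}, u <+: v → u ≠ v → List.Lex (·<·) u v := by
  intro u
  induction u with
  | nil => intro v _ hne
           cases v with
           | nil => exact absurd rfl hne
           | cons a v => exact List.Lex.nil
  | cons a u ih =>
      intro v hpre hne
      obtain ⟨t, ht⟩ := hpre
      cases v with
      | nil => simp at ht
      | cons b v =>
          obtain ⟨rfl, h2⟩ : a = b ∧ u ++ t = v := by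
            have := List.cons.injEq a (u++t) b v ▸ ht
            simpa using ht
          exact List.Lex.cons (ih ⟨t, h2⟩ (by rintro rfl; exact hne rfl))

lemma lex_of_split {pre s t : List (Fin N)} {α β : Fin N} (h : α < β) :
    List.Lex (·<·) (pre ++ α :: s) (pre ++ β :: t) := by
  induction pre with
  | nil => exact List.Lex.rel h
  | cons a pre ih => exact List.Lex.cons ih

lemma dictLe_iff {u v : List (Fin N)} : DictLe u v ↔ (u = v ∨ List.Lex (·<·) u v) := by
  constructor
  · rintro (h | ⟨x, s, t, α, β, hab, rfl, rfl⟩)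
    · by_cases he : u = v
      · exact Or.inl he
      · exact Or.inr (lex_of_prefix_ne h he)
    · exact Or.inr (lex_of_split hab)
  · rintro (rfl | h)
    · exact Or.inl (List.prefix_refl _)
    · induction h with
      | nil => exact Or.inl (List.nil_prefix)
      | @rel a l b l' hab => exact Or.inr ⟨[], l, l', a, b, hab, rfl, rfl⟩
      | @cons a l l' h ih =>
          rcases ih with h' | ⟨x, s, t, α, β, hab, rfl, rfl⟩
          · exact Or.inl (List.cons_prefix_cons.mpr ⟨rfl, h'⟩)
          · exact Or.inr ⟨a :: x, s, t, α, β, hab, rfl, rfl⟩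

lemma dictLt_iff {u v : List (Fin N)} : DictLt u v ↔ List.Lex (·<·) u v := by
  constructor
  · rintro ⟨hle, hne⟩
    rcases dictLe_iff.mp hle with rfl | h
    · exact absurd rfl hne
    · exact h
  · intro h
    refine ⟨dictLe_iff.mpr (Or.inr h), ?_⟩
    rintro rfl
    exact asymm_of (List.Lex (·<·)) h h

lemma dictLt_asymm {u v : List (Fin N)} (h : DictLt u v) : ¬ DictLt v u := by
  rw [dictLt_iff] at *
  exact asymm_of (List.Lex (·<·)) h

lemma dictLt_irrefl {u : List (Fin N)} : ¬ DictLt u u := fun h => h.2 rfl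

lemma dictLe_antisymm {u v : List (Fin N)} (h1 : DictLe u v) (h2 : DictLe v u) : u = v := by
  rcases dictLe_iff.mp h1 with rfl | h1'
  · rfl
  · rcases dictLe_iff.mp h2 with h | h2'
    · exact h.symm
    · exact absurd h2' (asymm_of (List.Lex (·<·)) h1')

lemma dictLt_split {pre s t : List (Fin N)} {α β : Fin N} (h : α < β) :
    DictLt (pre ++ α :: s) (pre ++ β :: t) := dictLt_iff.mpr (lex_of_split h)

lemma dictLt_last {u : List (Fin N)} {a b : Fin N} : DictLt (u ++ [a]) (u ++ [b]) ↔ a < b := by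
  constructor
  · intro h
    have h' := dictLt_iff.mp h
    induction u with
    | nil => simpa using h'
    | cons x u ih =>
        cases h' with
        | rel h'' => exact absurd h'' (lt_irrefl x)
        | cons h'' => exact ih (dictLt_iff.mpr h'') h''
  · intro h; exact dictLt_split h

lemma dictLe_last {u : List (Fin N)} {a b : Fin N} (h : a ≤ b) : DictLe (u ++ [a]) (u ++ [b]) := by
  rcases eq_or_lt_of_le h with rfl | h
  · exact Or.inl (List.prefix_refl _)
  · exact (dictLt_split (pre := u) (s := []) (t := []) h).1

lemma split_shorter {X : Type*} : ∀ (pre : List X) (u t s : List X) (α : X),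
    pre ++ α :: s = u ++ t → pre.length < u.length → ∃ s', u = pre ++ α :: s' := by
  intro pre
  induction pre with
  | nil =>
      intro u t s α h hlen
      cases u with
      | nil => simp at hlen
      | cons x u' =>
          simp only [List.nil_append, List.cons_append, List.cons.injEq] at h
          exact ⟨u', by rw [h.1]; rfl⟩
  | cons y pre ih =>
      intro u t s α h hlen
      cases u with
      | nil => simp at hlen
      | cons z u' =>
          simp only [List.cons_append, List.cons.injEq] at h
          obtain ⟨s', hs'⟩ := ih u' t s α h.2 (by simpa using Nat.lt_of_succ_lt_succ hlen)
          exact ⟨s', by rw [h.1, hs']; rfl⟩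

/-- extend the left word of a strict inequality when it is not a prefix -/
lemma dictLt_ext_left {u v : List (Fin N)} (hnp : ¬ u <+: v) (h : DictLt u v) (t : List (Fin N)) :
    DictLt (u ++ t) v := by
  rcases h.1 with hp | ⟨x, s, t', α, β, hab, rfl, rfl⟩
  · exact absurd hp hnp
  · rw [List.append_assoc, List.cons_append]
    exact dictLt_split hab

/-- extend the right word of a strict inequality when the left is not a prefix of it -/
lemma dictLt_ext_right {u v : List (Fin N)} (h : DictLt u v) (hnp : ¬ u <+: v) (t : List (Fin N)) :
    DictLt u (v ++ t) := by
  rcases h.1 with hp | ⟨x, s, t', α, β, hab, rfl, rfl⟩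
  · exact absurd hp hnp
  · rw [List.append_assoc, List.cons_append]
    exact dictLt_split hab

/-- inversion -/
lemma dictLt_cases {u v : List (Fin N)} (h : DictLt u v) :
    (u <+: v ∧ u ≠ v) ∨ ∃ (x s t : List (Fin N)) (α β : Fin N),
      α < β ∧ u = x ++ α :: s ∧ v = x ++ β :: t := by
  rcases h.1 with hp | hs
  · exact Or.inl ⟨hp, h.2⟩
  · exact Or.inr hs

lemma nat_mul_lt_iff {k a b j j' : ℕ} (hj : j < k) (hj' : j' < k) :
    a * k + j < b * k + j' ↔ (a < b ∨ (a = b ∧ j < j')) := by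
  constructor
  · intro h
    rcases Nat.lt_trichotomy a b with h' | rfl | h'
    · exact Or.inl h'
    · right; exact ⟨rfl, by omega⟩
    · exfalso
      have h2 : (b+1) * k ≤ a * k := Nat.mul_le_mul_right k (by omega)
      have h3 : (b+1) * k = b*k + k := by ring
      omega
  · rintro (h | ⟨rfl, h⟩)
    · have h2 : (a+1) * k ≤ b * k := Nat.mul_le_mul_right k (by omega)
      have h3 : (a+1) * k = a*k + k := by ring
      omega
    · omega

end Toolkit

/-- In the successor construction, fix `p = p_{s₀} ∈ P` and let
`P̃ = (P ∖ {p}) ∪ {p‖a_0, …, p‖a_{m-1}}` be the code obtained by expanding `p`,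
listed in reverse dictionary order.  Then the successor assignment of `P̃` is
uniquely determined: for `1 ≤ r ≤ m-1` and `1 ≤ j ≤ k` (here `j : Fin k` is
zero-based, representing `j+1`), `(p‖a_r)'_{j+1} = p‖a_{m+(m-1-r)k+j}`, while
`(p‖a_0)'_{j+1} = (p)'_{j+1}`, the corresponding successor of `p` computed for `P`. -/
theorem stmt13 (m n k l : ℕ) (hm : 2 ≤ m) (hmn : m ≤ n) (hk : 1 ≤ k)
    (hnm : n - m = k * (m - 1)) (hl : 1 ≤ l)
    (q : Fin l → List (Fin n))
    (hqA : ∀ s : Fin l, ∀ a ∈ q s, (a : ℕ) < m)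
    (hqcpc : ∀ ζ : ℕ → Fin n, (∀ i, (ζ i : ℕ) < m) →
      ∃! s : Fin l, IsPref (q s) ζ)
    (p : Fin l → List (Fin n))
    (hp : ∀ s : Fin l, p s = (⟨m - 1, by omega⟩ : Fin n) :: q s)
    (hrev : ∀ s t : Fin l, s < t → DictLt (p t) (p s))
    (f : Fin l → Fin k → List (Fin n)) (hf : IsSuccAssign m p f)
    (s₀ : Fin l)
    (l' : ℕ) (hl' : l' = l + m - 1)
    (pe : Fin l' → List (Fin n))
    (hrange : ∀ w : List (Fin n), (∃ t : Fin l', pe t = w) ↔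
      ((∃ s : Fin l, s ≠ s₀ ∧ p s = w) ∨
       (∃ r : Fin n, (r : ℕ) < m ∧ w = p s₀ ++ [r])))
    (hrev' : ∀ t t' : Fin l', t < t' → DictLt (pe t') (pe t))
    (fe : Fin l' → Fin k → List (Fin n)) (hfe : IsSuccAssign m pe fe) :
    (∀ (t : Fin l') (r : Fin n), 1 ≤ (r : ℕ) → (r : ℕ) < m →
      pe t = p s₀ ++ [r] →
      ∀ j : Fin k, ∃ c : Fin n,
        (c : ℕ) = m + (m - 1 - (r : ℕ)) * k + (j : ℕ) ∧
        fe t j = p s₀ ++ [c]) ∧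
    (∀ t : Fin l', pe t = p s₀ ++ [(⟨0, by omega⟩ : Fin n)] →
      ∀ j : Fin k, fe t j = f s₀ j) := by
  have hn : 0 < n := by omega
  -- letters of p s are < m
  have hpA : ∀ s : Fin l, ∀ a ∈ p s, (a : ℕ) < m := by
    intro s a ha
    rw [hp] at ha
    rcases List.mem_cons.mp ha with rfl | h
    · simp; omega
    · exact hqA s a h
  -- prefix incomparability of the code words
  have hincomp : ∀ s u : Fin l, s ≠ u → ¬ (p s <+: p u) := by
    intro s u hsu hpre
    rw [hp, hp] at hpre
    have hq : q s <+: q u := (List.cons_prefix_cons.mp hpre).2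
    set ζ : ℕ → Fin n := fun i => if h : i < (q u).length then (q u)[i] else ⟨0, hn⟩ with hζ
    have hζm : ∀ i, (ζ i : ℕ) < m := by
      intro i
      by_cases h : i < (q u).length
      · simpa [hζ, h] using hqA u _ (List.getElem_mem _)
      · simp only [hζ]
        rw [dif_neg h]
        simpa using by omega
    have hu : IsPref (q u) ζ := by
      intro i hi
      simp [hζ, hi]
    have hs : IsPref (q s) ζ := by
      intro i hi
      have hlen : i < (q u).length := lt_of_lt_of_le hi hq.length_le
      have hg := hq.getElem hi
      simp [hζ, hlen, ← hg]
    obtain ⟨w, hw, huniq⟩ := hqcpc ζ hζm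
    exact hsu ((huniq s hs).trans (huniq u hu).symm)
  -- p is injective
  have hpinj : ∀ s u : Fin l, p s = p u → s = u := by
    intro s u h
    by_contra hne
    exact hincomp s u hne (h ▸ List.prefix_refl _)
  -- order reflection for p
  have hprefl : ∀ s u : Fin l, DictLt (p s) (p u) → u < s := by
    intro s u h
    rcases lt_trichotomy u s with h' | rfl | h'
    · exact h'
    · exact absurd h dictLt_irrefl
    · exact absurd h (dictLt_asymm (hrev s u h'))
  -- order reflection for pe
  have hperefl : ∀ t t' : Fin l', DictLt (pe t) (pe t') → t' < t := by
    intro t t' h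
    rcases lt_trichotomy t' t with h' | rfl | h'
    · exact h'
    · exact absurd h dictLt_irrefl
    · exact absurd h (dictLt_asymm (hrev' t t' h'))
  -- pe is injective
  have hpeinj : ∀ t t' : Fin l', pe t = pe t' → t = t' := by
    intro t t' h
    rcases lt_trichotomy t t' with h' | rfl | h'
    · exact absurd (h ▸ hrev' t t' h') dictLt_irrefl
    · rfl
    · exact absurd (h ▸ hrev' t' t h') dictLt_irrefl
  -- classification of the range of pe
  have hclass : ∀ t : Fin l', (∃ s : Fin l, s ≠ s₀ ∧ p s = pe t) ∨
      (∃ r : Fin n, (r : ℕ) < m ∧ pe t = p s₀ ++ [r]) := fun t => (hrange (pe t)).mp ⟨t, rfl⟩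
  -- extension comparisons
  have hlt_ext : ∀ s : Fin l, s < s₀ → ∀ w : List (Fin n), DictLt (p s₀ ++ w) (p s) := by
    intro s hs w
    exact dictLt_ext_left (hincomp s₀ s (ne_of_gt hs)) (hrev s s₀ hs) w
  have hgt_ext : ∀ s : Fin l, s₀ < s → ∀ w : List (Fin n), DictLt (p s) (p s₀ ++ w) := by
    intro s hs w
    exact dictLt_ext_right (hrev s₀ s hs) (hincomp s s₀ (ne_of_gt hs)) w
  -- bound for the new letters
  have hcbound : ∀ r jv : ℕ, 1 ≤ r → r < m → jv < k → m + (m - 1 - r) * k + jv < n := by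
    intro r jv h1 h2 hj
    have h3 : (m - 1 - r) + 1 ≤ m - 1 := by omega
    have h4 := Nat.mul_le_mul_right k h3
    have h5 : ((m - 1 - r) + 1) * k = (m - 1 - r) * k + k := by ring
    have h6 : (m - 1) * k = k * (m - 1) := Nat.mul_comm _ _
    omega
  have zfin : Fin n := ⟨0, hn⟩
  have key : ∀ Nst : ℕ, ∀ (t : Fin l') (j : Fin k), (t : ℕ) * k + (j : ℕ) = Nst →
      ((∀ s : Fin l, s < s₀ → pe t = p s → fe t j = f s j) ∧
       (∀ r : Fin n, 1 ≤ (r : ℕ) → (r : ℕ) < m → pe t = p s₀ ++ [r] →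
          ∃ c : Fin n, (c : ℕ) = m + (m - 1 - (r : ℕ)) * k + (j : ℕ) ∧ fe t j = p s₀ ++ [c]) ∧
       (pe t = p s₀ ++ [(⟨0, hn⟩ : Fin n)] → fe t j = f s₀ j)) := by
    intro Nst
    induction Nst using Nat.strong_induction_on with
    | _ Nst IH =>
      intro t j hstage
      have IH' : ∀ (t' : Fin l') (j' : Fin k), (t' < t ∨ (t' = t ∧ j' < j)) →
          ((∀ s : Fin l, s < s₀ → pe t' = p s → fe t' j' = f s j') ∧
           (∀ r : Fin n, 1 ≤ (r : ℕ) → (r : ℕ) < m → pe t' = p s₀ ++ [r] →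
              ∃ c : Fin n, (c : ℕ) = m + (m - 1 - (r : ℕ)) * k + (j' : ℕ) ∧
                fe t' j' = p s₀ ++ [c]) ∧
           (pe t' = p s₀ ++ [(⟨0, hn⟩ : Fin n)] → fe t' j' = f s₀ j')) := by
        intro t' j' h
        refine IH _ ?_ t' j' rfl
        rcases h with h | ⟨rfl, h⟩
        · have h1 : (t' : ℕ) + 1 ≤ (t : ℕ) := h
          have h2 : ((t' : ℕ) + 1) * k ≤ (t : ℕ) * k := Nat.mul_le_mul_right k h1
          have h3 : ((t' : ℕ) + 1) * k = (t' : ℕ) * k + k := by ring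
          have h4 := j'.isLt
          omega
        · have h5 : (j' : ℕ) < (j : ℕ) := h
          omega
      refine ⟨?_, ?_, ?_⟩
      · -- bullet 1 : pe t = p s with s < s₀
        intro s hs hpe
        -- Prev fe t j ⊆ Prev f s j
        have hPrev1 : ∀ w ∈ Prev fe t j, w ∈ Prev f s j := by
          rintro w ⟨t', j', hlt, rfl⟩
          rcases hlt with hlt | hj'
          · have hord := hrev' t' t hlt
            rcases hclass t' with ⟨s', hs', hps'⟩ | ⟨r', hr', hpr'⟩
            · have hss : s' < s := by
                refine hprefl s s' ?_
                rw [hpe, ← hps'] at hord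
                exact hord
              have hfeq := (IH' t' j' (Or.inl hlt)).1 s' (lt_trans hss hs) hps'.symm
              exact ⟨s', j', Or.inl hss, hfeq⟩
            · exfalso
              have h1 : DictLt (p s₀ ++ [r']) (p s) := hlt_ext s hs [r']
              rw [← hpe, ← hpr'] at h1
              exact dictLt_asymm hord h1
          · have hfeq := (IH' t' j' (Or.inr ⟨hj'.1, hj'.2⟩)).1 s hs
              (by rw [hj'.1]; exact hpe)
            exact ⟨s, j', Or.inr ⟨rfl, hj'.2⟩, hfeq⟩
        -- Prev f s j ⊆ Prev fe t j
        have hPrev2 : ∀ w ∈ Prev f s j, w ∈ Prev fe t j := by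
          rintro w ⟨s', j', hlt, rfl⟩
          rcases hlt with hlt | hj'
          · obtain ⟨t', hpt'⟩ := (hrange (p s')).mpr
              (Or.inl ⟨s', ne_of_lt (lt_trans hlt hs), rfl⟩)
            have htt : t' < t := by
              refine hperefl t t' ?_
              rw [hpt', hpe]
              exact hrev s' s hlt
            have hfeq := (IH' t' j' (Or.inl htt)).1 s' (lt_trans hlt hs) hpt'
            exact ⟨t', j', Or.inl htt, hfeq.symm⟩
          · refine ⟨t, j', Or.inr ⟨rfl, hj'.2⟩, ?_⟩
            rw [hj'.1]
            exact ((IH' t j' (Or.inr ⟨rfl, hj'.2⟩)).1 s hs hpe).symm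
        -- candidate sets coincide
        have hCand : Cand m pe t (Prev fe t j) = Cand m p s (Prev f s j) := by
          ext w
          constructor
          · rintro ⟨⟨x, ⟨u', hxu, hxne⟩, jj, hjm, rfl⟩, hdlt, hnprev⟩
            rw [hpe] at hdlt
            refine ⟨⟨x, ?_, jj, hjm, rfl⟩, hdlt, fun hw => hnprev (hPrev2 _ hw)⟩
            rcases hclass u' with ⟨u, hu, hpu⟩ | ⟨r', hr', hpr'⟩
            · exact ⟨u, by rw [hpu]; exact hxu, by rw [hpu]; exact hxne⟩
            · rw [hpr'] at hxu hxne
              have hlen2 : (p s₀ ++ [r']).length = (p s₀).length + 1 := by simp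
              have hxlen : x.length ≤ (p s₀).length := by
                have h1 := hxu.length_le
                rcases Nat.lt_or_ge x.length ((p s₀).length + 1) with h2 | h2
                · omega
                · exfalso
                  exact hxne (List.IsPrefix.eq_of_length hxu (by omega))
              have hxp : x <+: p s₀ :=
                List.prefix_of_prefix_length_le hxu (List.prefix_append _ _) (by simpa using hxlen)
              by_cases hxe : x = p s₀
              · exfalso
                subst hxe
                exact dictLt_asymm hdlt (hlt_ext s hs [jj])
              · exact ⟨s₀, hxp, hxe⟩
          · rintro ⟨⟨x, ⟨u, hxu, hxne⟩, jj, hjm, rfl⟩, hdlt, hnprev⟩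
            refine ⟨⟨x, ?_, jj, hjm, rfl⟩, by rw [hpe]; exact hdlt,
              fun hw => hnprev (hPrev1 _ hw)⟩
            by_cases hu : u = s₀
            · rw [hu] at hxu hxne
              obtain ⟨t₀, ht₀⟩ := (hrange (p s₀ ++ [(⟨0, hn⟩ : Fin n)])).mpr
                (Or.inr ⟨⟨0, hn⟩, by simpa using by omega, rfl⟩)
              have hxlen : x.length < (p s₀).length := by
                rcases Nat.lt_or_ge x.length (p s₀).length with h2 | h2
                · exact h2
                · exact absurd (List.IsPrefix.eq_of_length hxu
                    (le_antisymm hxu.length_le h2)) hxne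
              refine ⟨t₀, ?_, ?_⟩
              · rw [ht₀]
                exact hxu.trans (List.prefix_append _ _)
              · rw [ht₀]
                intro hcon
                have := congrArg List.length hcon
                simp at this
                omega
            · obtain ⟨t', hpt'⟩ := (hrange (p u)).mpr (Or.inl ⟨u, hu, rfl⟩)
              exact ⟨t', by rw [hpt']; exact hxu, by rw [hpt']; exact hxne⟩
        have h1 := hf s j
        have h2 := hfe t j
        rw [hCand] at h2
        exact dictLe_antisymm (h2.2 _ h1.1) (h1.2 _ h2.1)
      · -- bullet 2 : pe t = p s₀ ++ [r], 1 ≤ r < m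
        intro r hr1 hrm hpe
        have hcb : m + (m - 1 - (r : ℕ)) * k + (j : ℕ) < n := hcbound _ _ hr1 hrm j.isLt
        -- description of Prev fe t j
        have hPrevB1 : ∀ w ∈ Prev fe t j,
            (∃ s' : Fin l, s' < s₀ ∧ ∃ j' : Fin k, w = f s' j') ∨
            (∃ c' : Fin n, m ≤ (c' : ℕ) ∧
              (c' : ℕ) < m + (m - 1 - (r : ℕ)) * k + (j : ℕ) ∧ w = p s₀ ++ [c']) := by
          rintro w ⟨t', j', hlt, rfl⟩
          rcases hlt with hlt | hj'
          · have hord := hrev' t' t hlt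
            rw [hpe] at hord
            rcases hclass t' with ⟨s', hs', hps'⟩ | ⟨r', hr', hpr'⟩
            · have hss : s' < s₀ := by
                rcases lt_trichotomy s' s₀ with h' | h' | h'
                · exact h'
                · exact absurd h' hs'
                · exfalso
                  have hx := hgt_ext s' h' [r]
                  rw [← hps'] at hord
                  exact dictLt_asymm hord hx
              exact Or.inl ⟨s', hss, j', (IH' t' j' (Or.inl hlt)).1 s' hss hps'.symm⟩
            · have hord2 : DictLt (p s₀ ++ [r]) (p s₀ ++ [r']) := by
                rw [← hpr']; exact hord
              have hrr : r < r' := dictLt_last.mp hord2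
              have hrrv : (r : ℕ) < (r' : ℕ) := hrr
              have hr'1 : 1 ≤ (r' : ℕ) := by omega
              obtain ⟨c', hc'v, hc'e⟩ := (IH' t' j' (Or.inl hlt)).2.1 r' hr'1 hr' hpr'
              refine Or.inr ⟨c', by omega, ?_, hc'e⟩
              have ha : (m - 1 - (r' : ℕ)) < (m - 1 - (r : ℕ)) := by omega
              have hlt2 := (nat_mul_lt_iff (j'.isLt) (j.isLt)).mpr
                (Or.inl ha : (m - 1 - (r' : ℕ)) < (m - 1 - (r : ℕ)) ∨ _)
              omega
          · obtain ⟨c', hc'v, hc'e⟩ := (IH' t' j' (Or.inr hj')).2.1 r hr1 hrm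
              (by rw [hj'.1]; exact hpe)
            refine Or.inr ⟨c', by omega, ?_, hc'e⟩
            have hj'j : (j' : ℕ) < (j : ℕ) := hj'.2
            omega
        -- every smaller new word has been taken already
        have hPrevB2 : ∀ c' : Fin n, m ≤ (c' : ℕ) →
            (c' : ℕ) < m + (m - 1 - (r : ℕ)) * k + (j : ℕ) →
            p s₀ ++ [c'] ∈ Prev fe t j := by
          intro c' hc'm hc'lt
          obtain ⟨d, hd⟩ : ∃ d, (c' : ℕ) = m + d := ⟨(c' : ℕ) - m, by omega⟩
          have hdlt : d < (m - 1 - (r : ℕ)) * k + (j : ℕ) := by omega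
          have hkpos : 0 < k := hk
          obtain ⟨a, j'v, hj'k, hdm⟩ : ∃ a j'v, j'v < k ∧ d = a * k + j'v :=
            ⟨d / k, d % k, Nat.mod_lt _ hkpos,
              by rw [Nat.mul_comm]; exact (Nat.div_add_mod d k).symm⟩
          have haub : a ≤ m - 1 - (r : ℕ) := by
            by_contra hcon
            push_neg at hcon
            have h2 : (m - 1 - (r : ℕ) + 1) * k ≤ a * k := Nat.mul_le_mul_right k (by omega)
            have h4 : (m - 1 - (r : ℕ) + 1) * k = (m - 1 - (r : ℕ)) * k + k := by ring
            omega
          have hr'1 : 1 ≤ m - 1 - a := by omega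
          have hr'm : m - 1 - a < m := by omega
          have hr'n : m - 1 - a < n := by omega
          have hminus : m - 1 - (m - 1 - a) = a := by omega
          have hc'eq : (c' : ℕ) = m + a * k + j'v := by omega
          obtain ⟨t', hpt'⟩ := (hrange (p s₀ ++ [(⟨m - 1 - a, hr'n⟩ : Fin n)])).mpr
            (Or.inr ⟨⟨m - 1 - a, hr'n⟩, hr'm, rfl⟩)
          rcases Nat.lt_or_ge a (m - 1 - (r : ℕ)) with hcase | hcase
          · have hrr' : (r : ℕ) < m - 1 - a := by omega
            have htt : t' < t := by
              refine hperefl t t' ?_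
              rw [hpt', hpe]
              exact dictLt_last.mpr hrr'
            obtain ⟨c'', hc''v, hc''e⟩ := (IH' t' ⟨j'v, hj'k⟩ (Or.inl htt)).2.1
              ⟨m - 1 - a, hr'n⟩ hr'1 hr'm hpt'
            have hc''v' : (c'' : ℕ) = m + (m - 1 - (m - 1 - a)) * k + j'v := hc''v
            rw [hminus] at hc''v'
            have hcc : c'' = c' := by
              apply Fin.ext
              omega
            exact ⟨t', ⟨j'v, hj'k⟩, Or.inl htt, by rw [← hcc]; exact hc''e.symm⟩
          · have haeq : a = m - 1 - (r : ℕ) := le_antisymm haub hcase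
            have hre : (⟨m - 1 - a, hr'n⟩ : Fin n) = r := by
              apply Fin.ext
              show m - 1 - a = (r : ℕ)
              omega
            have htt : t' = t := hpeinj t' t (by rw [hpt', hpe, hre])
            have h9 : a * k = (m - 1 - (r : ℕ)) * k := by rw [haeq]
            have hj'j : j'v < (j : ℕ) := by omega
            obtain ⟨c'', hc''v, hc''e⟩ := (IH' t' ⟨j'v, hj'k⟩
              (Or.inr ⟨htt, hj'j⟩)).2.1 r hr1 hrm (by rw [htt]; exact hpe)
            have hc''v' : (c'' : ℕ) = m + (m - 1 - (r : ℕ)) * k + j'v := hc''v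
            have hcc : c'' = c' := by
              apply Fin.ext
              omega
            exact ⟨t', ⟨j'v, hj'k⟩, Or.inr ⟨htt, hj'j⟩, by rw [← hcc]; exact hc''e.symm⟩
        -- membership of the claimed word
        have hmem : (p s₀ ++ [(⟨m + (m - 1 - (r : ℕ)) * k + (j : ℕ), hcb⟩ : Fin n)])
            ∈ Cand m pe t (Prev fe t j) := by
          refine ⟨⟨p s₀, ⟨t, ?_, ?_⟩, ⟨m + (m - 1 - (r : ℕ)) * k + (j : ℕ), hcb⟩,
            (show m ≤ m + (m - 1 - (r : ℕ)) * k + (j : ℕ) by omega), rfl⟩, ?_, ?_⟩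
          · rw [hpe]; exact List.prefix_append _ _
          · rw [hpe]
            intro hcon
            have := congrArg List.length hcon
            simp at this
          · rw [hpe]
            exact dictLt_last.mpr (show (r : ℕ) < m + (m - 1 - (r : ℕ)) * k + (j : ℕ) by omega)
          · intro hw
            rcases hPrevB1 _ hw with ⟨s', hss, j', hwf⟩ | ⟨c', hmc', hc'lt, hwc⟩
            · obtain ⟨⟨x, ⟨u, hxu, hxne⟩, jj, hjm, hw'⟩, -, -⟩ := (hf s' j').1
              have heq : p s₀ ++ [(⟨m + (m - 1 - (r : ℕ)) * k + (j : ℕ), hcb⟩ : Fin n)]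
                  = x ++ [jj] := hwf.trans hw'
              obtain ⟨hx, -⟩ := List.append_inj' heq (by simp)
              by_cases hus : u = s₀
              · exact hxne (by rw [← hx, hus])
              · exact hincomp s₀ u (Ne.symm hus) (hx ▸ hxu)
            · have h6 := List.append_cancel_left hwc
              have h7 : (⟨m + (m - 1 - (r : ℕ)) * k + (j : ℕ), hcb⟩ : Fin n) = c' := by
                simpa using h6
              rw [← h7] at hc'lt
              exact absurd (show (m + (m - 1 - (r : ℕ)) * k + (j : ℕ))
                < m + (m - 1 - (r : ℕ)) * k + (j : ℕ) from hc'lt) (by omega)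
        -- minimality of the claimed word
        have hminl : ∀ w ∈ Cand m pe t (Prev fe t j),
            DictLe (p s₀ ++ [(⟨m + (m - 1 - (r : ℕ)) * k + (j : ℕ), hcb⟩ : Fin n)]) w := by
          rintro w ⟨⟨x, ⟨u', hxu, hxne⟩, jj, hjm, rfl⟩, hdlt, hnprev⟩
          rw [hpe] at hdlt
          by_cases hpx : p s₀ <+: x
          · have hxe : x = p s₀ := by
              rcases hclass u' with ⟨u, hu, hpu⟩ | ⟨r'', hr'', hpr''⟩
              · exfalso
                exact hincomp s₀ u (Ne.symm hu) (hpx.trans (by rw [hpu]; exact hxu))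
              · rw [hpr''] at hxu hxne
                have hlen2 : (p s₀ ++ [r'']).length = (p s₀).length + 1 := by simp
                have hxlen : x.length ≤ (p s₀).length := by
                  have h1 := hxu.length_le
                  rcases Nat.lt_or_ge x.length ((p s₀).length + 1) with h2 | h2
                  · omega
                  · exact absurd (List.IsPrefix.eq_of_length hxu (by omega)) hxne
                exact (List.IsPrefix.eq_of_length hpx
                  (le_antisymm hpx.length_le hxlen)).symm
            rw [hxe]
            refine dictLe_last ?_
            show (m + (m - 1 - (r : ℕ)) * k + (j : ℕ)) ≤ (jj : ℕ)
            by_contra hcon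
            push_neg at hcon
            refine hnprev ?_
            rw [hxe]
            exact hPrevB2 jj hjm hcon
          · rcases dictLt_cases hdlt with ⟨hpre, hne⟩ | ⟨pre, s_, t_, α, β, hab, heq1, heq2⟩
            · exfalso
              have hlen1 : (p s₀).length + 1 ≤ x.length + 1 := by
                have := hpre.length_le
                simpa using this
              rcases Nat.eq_or_lt_of_le hlen1 with h2 | h2
              · exact hne (List.IsPrefix.eq_of_length hpre (by simp; omega))
              · refine hpx ?_
                have h4 : p s₀ <+: x ++ [jj] := (List.prefix_append _ _).trans hpre
                exact List.prefix_of_prefix_length_le h4 ⟨[jj], rfl⟩ (by omega)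
            · have hprelen : pre.length ≤ (p s₀).length := by
                have := congrArg List.length heq1
                simp at this
                omega
              rcases Nat.eq_or_lt_of_le hprelen with h2 | h2
              · exfalso
                have hprefix : pre <+: p s₀ ++ [r] := ⟨α :: s_, heq1.symm⟩
                have hpe2 : pre = p s₀ := by
                  have h5 : pre <+: p s₀ := List.prefix_of_prefix_length_le hprefix
                    (List.prefix_append _ _) (by omega)
                  exact h5.eq_of_length h2
                cases t_ with
                | nil =>
                    have h6 : x ++ [jj] = p s₀ ++ [β] := by rw [heq2, hpe2]
                    have hxp : x = p s₀ := (List.append_inj' h6 (by simp)).1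
                    exact hpx (hxp ▸ List.prefix_refl _)
                | cons y t_' =>
                    have h6 : x ++ [jj] = p s₀ ++ β :: y :: t_' := by rw [heq2, hpe2]
                    have h7 : (p s₀).length ≤ x.length := by
                      have := congrArg List.length h6
                      simp at this
                      omega
                    refine hpx ?_
                    have h9 : p s₀ <+: x ++ [jj] := ⟨β :: y :: t_', h6.symm⟩
                    exact List.prefix_of_prefix_length_le h9 ⟨[jj], rfl⟩ h7
              · obtain ⟨s'', hs''⟩ := split_shorter pre (p s₀) [r] s_ α heq1.symm h2
                have hfin : DictLt (p s₀ ++ [(⟨m + (m - 1 - (r : ℕ)) * k + (j : ℕ), hcb⟩ : Fin n)])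
                    (pre ++ β :: t_) := by
                  rw [hs'']
                  simp only [List.append_assoc, List.cons_append, List.nil_append]
                  exact dictLt_split hab
                rw [heq2]
                exact hfin.1
        have h2 := hfe t j
        exact ⟨⟨m + (m - 1 - (r : ℕ)) * k + (j : ℕ), hcb⟩, rfl,
          dictLe_antisymm (h2.2 _ hmem) (hminl _ h2.1)⟩
      · -- bullet 3 : pe t = p s₀ ++ [a_0]
        intro hpe
        have hzm : (0 : ℕ) < m := by omega
        have hPrevZ2 : ∀ s' : Fin l, s' < s₀ → ∀ j' : Fin k, f s' j' ∈ Prev fe t j := by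
          intro s' hs' j'
          obtain ⟨t', hpt'⟩ := (hrange (p s')).mpr (Or.inl ⟨s', ne_of_lt hs', rfl⟩)
          have htt : t' < t := by
            refine hperefl t t' ?_
            rw [hpt', hpe]
            exact hlt_ext s' hs' [⟨0, hn⟩]
          exact ⟨t', j', Or.inl htt, ((IH' t' j' (Or.inl htt)).1 s' hs' hpt').symm⟩
        have hPrevZ3 : ∀ j' : Fin k, j' < j → f s₀ j' ∈ Prev fe t j := by
          intro j' hj'
          exact ⟨t, j', Or.inr ⟨rfl, hj'⟩, ((IH' t j' (Or.inr ⟨rfl, hj'⟩)).2.2 hpe).symm⟩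
        have hPrevZ4 : ∀ c' : Fin n, m ≤ (c' : ℕ) → p s₀ ++ [c'] ∈ Prev fe t j := by
          intro c' hc'm
          have hc'n := c'.isLt
          obtain ⟨d, hd⟩ : ∃ d, (c' : ℕ) = m + d := ⟨(c' : ℕ) - m, by omega⟩
          have hkm : k * (m - 1) = (m - 1) * k := Nat.mul_comm _ _
          have hdlt : d < (m - 1) * k := by omega
          have hkpos : 0 < k := hk
          obtain ⟨a, j'v, hj'k, hdm⟩ : ∃ a j'v, j'v < k ∧ d = a * k + j'v :=
            ⟨d / k, d % k, Nat.mod_lt _ hkpos,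
              by rw [Nat.mul_comm]; exact (Nat.div_add_mod d k).symm⟩
          have haub : a ≤ m - 2 := by
            by_contra hcon
            push_neg at hcon
            have h2 : (m - 1) * k ≤ a * k := Nat.mul_le_mul_right k (by omega)
            omega
          have hr'1 : 1 ≤ m - 1 - a := by omega
          have hr'm : m - 1 - a < m := by omega
          have hr'n : m - 1 - a < n := by omega
          have hminus : m - 1 - (m - 1 - a) = a := by omega
          obtain ⟨t', hpt'⟩ := (hrange (p s₀ ++ [(⟨m - 1 - a, hr'n⟩ : Fin n)])).mpr
            (Or.inr ⟨⟨m - 1 - a, hr'n⟩, hr'm, rfl⟩)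
          have htt : t' < t := by
            refine hperefl t t' ?_
            rw [hpt', hpe]
            exact dictLt_last.mpr (show (0 : ℕ) < m - 1 - a by omega)
          obtain ⟨c'', hc''v, hc''e⟩ := (IH' t' ⟨j'v, hj'k⟩ (Or.inl htt)).2.1
            ⟨m - 1 - a, hr'n⟩ hr'1 hr'm hpt'
          have hc''v' : (c'' : ℕ) = m + (m - 1 - (m - 1 - a)) * k + j'v := hc''v
          rw [hminus] at hc''v'
          have hcc : c'' = c' := by apply Fin.ext; omega
          exact ⟨t', ⟨j'v, hj'k⟩, Or.inl htt, by rw [← hcc]; exact hc''e.symm⟩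
        have hPrevZ1 : ∀ w ∈ Prev fe t j, w ∈ Prev f s₀ j ∨
            (∃ c' : Fin n, m ≤ (c' : ℕ) ∧ w = p s₀ ++ [c']) := by
          rintro w ⟨t', j', hlt, rfl⟩
          rcases hlt with hlt | hj'
          · have hord := hrev' t' t hlt
            rw [hpe] at hord
            rcases hclass t' with ⟨s', hs', hps'⟩ | ⟨r', hr', hpr'⟩
            · have hss : s' < s₀ := by
                rcases lt_trichotomy s' s₀ with h' | h' | h'
                · exact h'
                · exact absurd h' hs'
                · exfalso
                  have hx := hgt_ext s' h' [⟨0, hn⟩]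
                  rw [← hps'] at hord
                  exact dictLt_asymm hord hx
              exact Or.inl ⟨s', j', Or.inl hss, (IH' t' j' (Or.inl hlt)).1 s' hss hps'.symm⟩
            · have hord2 : DictLt (p s₀ ++ [(⟨0, hn⟩ : Fin n)]) (p s₀ ++ [r']) := by
                rw [← hpr']; exact hord
              have hrr : (0 : ℕ) < (r' : ℕ) := dictLt_last.mp hord2
              obtain ⟨c', hc'v, hc'e⟩ := (IH' t' j' (Or.inl hlt)).2.1 r' (by omega) hr' hpr'
              exact Or.inr ⟨c', by omega, hc'e⟩
          · exact Or.inl ⟨s₀, j', Or.inr ⟨rfl, hj'.2⟩,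
              (IH' t' j' (Or.inr hj')).2.2 (by rw [hj'.1]; exact hpe)⟩
        obtain ⟨⟨x0, ⟨u0, hxu0, hxne0⟩, jj0, hjm0, hw0⟩, hdlt0, hnprev0⟩ := (hf s₀ j).1
        rw [hw0] at hdlt0
        have hnpx0 : ¬ p s₀ <+: x0 := by
          intro hcon
          by_cases hus : u0 = s₀
          · rw [hus] at hxu0 hxne0
            have h1 : x0.length < (p s₀).length := by
              rcases Nat.lt_or_ge x0.length (p s₀).length with h2 | h2
              · exact h2
              · exact absurd (List.IsPrefix.eq_of_length hxu0
                  (le_antisymm hxu0.length_le h2)) hxne0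
            have := hcon.length_le
            omega
          · exact hincomp s₀ u0 (Ne.symm hus) (hcon.trans hxu0)
        have hiff1 : ∀ (x : List (Fin n)) (jj : Fin n), m ≤ (jj : ℕ) → ¬ p s₀ <+: x →
            DictLt (p s₀) (x ++ [jj]) →
            DictLt (p s₀ ++ [(⟨0, hn⟩ : Fin n)]) (x ++ [jj]) := by
          intro x jj hjm hnpx hdlt
          rcases dictLt_cases hdlt with ⟨hpre, hne⟩ | ⟨pre, s_, t_, α, β, hab, heq1, heq2⟩
          · exfalso
            rcases Nat.lt_or_ge x.length (p s₀).length with h2 | h2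
            · have h3 := hpre.length_le
              simp only [List.length_append, List.length_singleton] at h3
              have h4 : (p s₀).length = (x ++ [jj]).length := by simp; omega
              have h5 : p s₀ = x ++ [jj] := List.IsPrefix.eq_of_length hpre h4
              have h6 : jj ∈ p s₀ := by rw [h5]; simp
              have := hpA s₀ jj h6
              omega
            · exact hnpx (List.prefix_of_prefix_length_le hpre ⟨[jj], rfl⟩ h2)
          · rw [heq2, heq1]
            simp only [List.append_assoc, List.cons_append, List.nil_append]
            exact dictLt_split hab
        have hiff2 : ∀ (x : List (Fin n)) (jj : Fin n), m ≤ (jj : ℕ) → ¬ p s₀ <+: x →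
            DictLt (p s₀ ++ [(⟨0, hn⟩ : Fin n)]) (x ++ [jj]) →
            DictLt (p s₀) (x ++ [jj]) := by
          intro x jj hjm hnpx hdlt
          rcases dictLt_cases hdlt with ⟨hpre, hne⟩ | ⟨pre, s_, t_, α, β, hab, heq1, heq2⟩
          · exfalso
            have hlen1 : (p s₀).length + 1 ≤ x.length + 1 := by
              have := hpre.length_le
              simpa using this
            rcases Nat.eq_or_lt_of_le hlen1 with h2 | h2
            · exact hne (List.IsPrefix.eq_of_length hpre (by simp; omega))
            · refine hnpx ?_
              have h4 : p s₀ <+: x ++ [jj] := (List.prefix_append _ _).trans hpre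
              exact List.prefix_of_prefix_length_le h4 ⟨[jj], rfl⟩ (by omega)
          · have hprelen : pre.length ≤ (p s₀).length := by
              have := congrArg List.length heq1
              simp at this
              omega
            rcases Nat.eq_or_lt_of_le hprelen with h2 | h2
            · have hprefix : pre <+: p s₀ ++ [(⟨0, hn⟩ : Fin n)] := ⟨α :: s_, heq1.symm⟩
              have hpe2 : pre = p s₀ :=
                (List.prefix_of_prefix_length_le hprefix (List.prefix_append _ _)
                  (by omega)).eq_of_length h2
              refine ⟨Or.inl ?_, ?_⟩
              · rw [heq2, hpe2]
                exact List.prefix_append _ _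
              · rw [heq2, hpe2]
                intro hcon
                have := congrArg List.length hcon
                simp at this
            · obtain ⟨s'', hs''⟩ := split_shorter pre (p s₀) [(⟨0, hn⟩ : Fin n)] s_ α heq1.symm h2
              rw [heq2, hs'']
              exact dictLt_split hab
        have hmemz : f s₀ j ∈ Cand m pe t (Prev fe t j) := by
          refine ⟨⟨x0, ?_, jj0, hjm0, hw0⟩, ?_, ?_⟩
          · by_cases hus : u0 = s₀
            · rw [hus] at hxu0 hxne0
              obtain ⟨t₀, ht₀⟩ := (hrange (p s₀ ++ [(⟨0, hn⟩ : Fin n)])).mpr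
                (Or.inr ⟨⟨0, hn⟩, hzm, rfl⟩)
              have hxlen : x0.length < (p s₀).length := by
                rcases Nat.lt_or_ge x0.length (p s₀).length with h2 | h2
                · exact h2
                · exact absurd (List.IsPrefix.eq_of_length hxu0
                    (le_antisymm hxu0.length_le h2)) hxne0
              refine ⟨t₀, ?_, ?_⟩
              · rw [ht₀]
                exact hxu0.trans (List.prefix_append _ _)
              · rw [ht₀]
                intro hcon
                have := congrArg List.length hcon
                simp at this
                omega
            · obtain ⟨t', hpt'⟩ := (hrange (p u0)).mpr (Or.inl ⟨u0, hus, rfl⟩)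
              exact ⟨t', by rw [hpt']; exact hxu0, by rw [hpt']; exact hxne0⟩
          · rw [hpe, hw0]
            exact hiff1 x0 jj0 hjm0 hnpx0 hdlt0
          · intro hw
            rcases hPrevZ1 _ hw with hv | ⟨c', hmc', hwc⟩
            · exact hnprev0 hv
            · have heq : x0 ++ [jj0] = p s₀ ++ [c'] := by rw [← hw0]; exact hwc
              have hxp := (List.append_inj' heq (by simp)).1
              exact hnpx0 (by rw [hxp])
        have hminz : ∀ w ∈ Cand m pe t (Prev fe t j), DictLe (f s₀ j) w := by
          rintro w ⟨⟨x, ⟨u', hxu, hxne⟩, jj, hjm, rfl⟩, hdlt, hnprev⟩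
          rw [hpe] at hdlt
          have hnpx : ¬ p s₀ <+: x := by
            intro hcon
            have hxe : x = p s₀ := by
              rcases hclass u' with ⟨u, hu, hpu⟩ | ⟨r'', hr'', hpr''⟩
              · exact absurd (hcon.trans (by rw [hpu]; exact hxu))
                  (hincomp s₀ u (Ne.symm hu))
              · rw [hpr''] at hxu hxne
                have hlen2 : (p s₀ ++ [r'']).length = (p s₀).length + 1 := by simp
                have hxlen : x.length ≤ (p s₀).length := by
                  have h1 := hxu.length_le
                  rcases Nat.lt_or_ge x.length ((p s₀).length + 1) with h2 | h2
                  · omega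
                  · exact absurd (List.IsPrefix.eq_of_length hxu (by omega)) hxne
                exact (List.IsPrefix.eq_of_length hcon
                  (le_antisymm hcon.length_le hxlen)).symm
            refine hnprev ?_
            rw [hxe]
            exact hPrevZ4 jj hjm
          have hwc : (x ++ [jj]) ∈ Cand m p s₀ (Prev f s₀ j) := by
            refine ⟨⟨x, ?_, jj, hjm, rfl⟩, hiff2 x jj hjm hnpx hdlt, ?_⟩
            · rcases hclass u' with ⟨u, hu, hpu⟩ | ⟨r'', hr'', hpr''⟩
              · exact ⟨u, by rw [hpu]; exact hxu, by rw [hpu]; exact hxne⟩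
              · rw [hpr''] at hxu hxne
                have hlen2 : (p s₀ ++ [r'']).length = (p s₀).length + 1 := by simp
                have hxlen : x.length ≤ (p s₀).length := by
                  have h1 := hxu.length_le
                  rcases Nat.lt_or_ge x.length ((p s₀).length + 1) with h2 | h2
                  · omega
                  · exact absurd (List.IsPrefix.eq_of_length hxu (by omega)) hxne
                have hxp : x <+: p s₀ := List.prefix_of_prefix_length_le hxu
                  (List.prefix_append _ _) (by simpa using hxlen)
                refine ⟨s₀, hxp, fun hcon => hnpx (by rw [hcon])⟩
            · rintro ⟨s', j', hlt', heqv⟩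
              rcases hlt' with hlt' | hj''
              · exact hnprev (by rw [heqv]; exact hPrevZ2 s' hlt' j')
              · refine hnprev ?_
                rw [heqv, hj''.1]
                exact hPrevZ3 j' hj''.2
          exact (hf s₀ j).2 _ hwc
        exact dictLe_antisymm ((hfe t j).2 _ hmemz) (hminz _ (hfe t j).1)
  constructor
  · intro t r h1 h2 hpe j
    exact (key ((t : ℕ) * k + (j : ℕ)) t j rfl).2.1 r h1 h2 hpe
  · intro t hpe j
    exact (key ((t : ℕ) * k + (j : ℕ)) t j rfl).2.2 hpe
end Paper
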